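/- Let 1 < p < d. Then for all functions u in the homogeneous Sobolev space (e.g., u Schwartz on ℝ^d), the L^p norm of |x|^{-1} u(x) is bounded by a constant (depending on p, d) times the L^p norm of the gradient ∇u. -/

import Mathlib

/-!
Along the ray through `x ≠ 0`, `u x = -∫_1^∞ Du(t x) x dt`, so `‖x‖⁻¹ ‖u x‖ ≤ ∫_1^∞ ‖Du(t x)‖ dt`.
Hölder's inequality with the weight `t ^ α`, `p - 1 < α < d - 1`, bounds the `p`-th power of this
by a constant times `∫_1^∞ ‖Du(t x)‖^p t^α dt`. Integrating in `x` and rescaling `y = t x` turns the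
right-hand side into `∫_1^∞ t^(α - d) dt · ‖Du‖_p^p`, which is finite because `α < d - 1`.
-/

open MeasureTheory Set Filter Topology
open scoped ENNReal SchwartzMap

noncomputable section

abbrev Euc (d : ℕ) := EuclideanSpace ℝ (Fin d)

theorem enorm_le_lintegral_enorm_deriv_Ioi {F : Type*} [NormedAddCommGroup F] [NormedSpace ℝ F]
    [CompleteSpace F] {f f' : ℝ → F} {a : ℝ} (hderiv : ∀ t ∈ Ici a, HasDerivAt f (f' t) t)
    (hf' : AEStronglyMeasurable f' (volume.restrict (Ioi a))) (hf : Tendsto f atTop (𝓝 0)) :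
    ‖f a‖ₑ ≤ ∫⁻ t in Ioi a, ‖f' t‖ₑ := by
  by_cases hint : IntegrableOn f' (Ioi a)
  · calc ‖f a‖ₑ = ‖∫ t in Ioi a, f' t‖ₑ := by
          rw [integral_Ioi_of_hasDerivAt_of_tendsto' hderiv hint hf, zero_sub, enorm_neg]
      _ ≤ ∫⁻ t in Ioi a, ‖f' t‖ₑ := enorm_integral_le_lintegral_enorm _
  · have : ∫⁻ t in Ioi a, ‖f' t‖ₑ = ∞ := not_lt_top_iff.1 fun h => hint ⟨hf', h⟩
    simp [this]

theorem SchwartzMap.enorm_inv_norm_smul_le_lintegral_fderiv {E F : Type*} [NormedAddCommGroup E]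
    [NormedSpace ℝ E] [ProperSpace E] [NormedAddCommGroup F] [NormedSpace ℝ F] [CompleteSpace F]
    (u : 𝓢(E, F)) {x : E} (hx : x ≠ 0) :
    ‖‖x‖⁻¹ • u x‖ₑ ≤ ∫⁻ t in Ioi (1 : ℝ), ‖fderiv ℝ u (t • x)‖ₑ := by
  have hx' : ‖x‖ₑ ≠ 0 := enorm_ne_zero.2 hx
  have hray : Tendsto (fun t : ℝ => t • x) atTop (cocompact E) := by
    rw [← Metric.cobounded_eq_cocompact, ← tendsto_norm_atTop_iff_cobounded]
    simp_rw [norm_smul]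
    exact tendsto_norm_atTop_atTop.atTop_mul_const (norm_pos_iff.2 hx)
  have hderiv (t : ℝ) : HasDerivAt (fun s : ℝ => u (s • x)) (fderiv ℝ u (t • x) x) t := by
    simpa [Function.comp_def] using
      u.differentiableAt.hasFDerivAt.comp_hasDerivAt t ((hasDerivAt_id t).smul_const x)
  have hcont : Continuous fun t : ℝ => fderiv ℝ u (t • x) :=
    ((u.smooth 1).continuous_fderiv one_ne_zero).comp (continuous_id.smul continuous_const)
  have hbound := enorm_le_lintegral_enorm_deriv_Ioi (a := 1) (fun t _ => hderiv t)
    (hcont.clm_apply continuous_const).aestronglyMeasurable ((u.tendsto_cocompact).comp hray)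
  rw [one_smul] at hbound
  calc ‖‖x‖⁻¹ • u x‖ₑ = ‖x‖ₑ⁻¹ * ‖u x‖ₑ := by
        rw [enorm_smul, enorm_inv (norm_ne_zero_iff.2 hx), enorm_norm]
    _ ≤ ‖x‖ₑ⁻¹ * ∫⁻ t in Ioi (1 : ℝ), ‖fderiv ℝ u (t • x)‖ₑ * ‖x‖ₑ := by
        gcongr
        exact hbound.trans (lintegral_mono fun t => ContinuousLinearMap.le_opENorm _ _)
    _ = ∫⁻ t in Ioi (1 : ℝ), ‖fderiv ℝ u (t • x)‖ₑ := by
        rw [lintegral_mul_const' _ _ enorm_ne_top, mul_comm, mul_assoc,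
          ENNReal.mul_inv_cancel hx' enorm_ne_top, mul_one]

theorem lintegral_rpow_le_weight_mul_lintegral_rpow_mul {α : Type*} [MeasurableSpace α]
    {μ : Measure α} {p : ℝ} (hp : 1 < p) {f w : α → ℝ≥0∞} (hf : AEMeasurable f μ)
    (hw : AEMeasurable w μ) (hw₀ : ∀ᵐ x ∂μ, w x ≠ 0) (hw_top : ∀ᵐ x ∂μ, w x ≠ ∞) :
    (∫⁻ x, f x ∂μ) ^ p ≤
      (∫⁻ x, w x ^ (-(p - 1)⁻¹) ∂μ) ^ (p - 1) * ∫⁻ x, f x ^ p * w x ∂μ := by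
  have hpq : p.HolderConjugate p.conjExponent := .conjExponent hp
  set q := p.conjExponent
  have hp₀ : 0 < p := hpq.pos
  have hfw : ∫⁻ x, f x ∂μ = ∫⁻ x, (f x * w x ^ p⁻¹) * w x ^ (-p⁻¹) ∂μ := by
    refine lintegral_congr_ae ?_
    filter_upwards [hw₀, hw_top] with x h₀ h_top
    rw [mul_assoc, ← ENNReal.rpow_add _ _ h₀ h_top, add_neg_cancel, ENNReal.rpow_zero, mul_one]
  have hf_p : ∫⁻ x, (f x * w x ^ p⁻¹) ^ p ∂μ = ∫⁻ x, f x ^ p * w x ∂μ := by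
    refine lintegral_congr fun x => ?_
    rw [ENNReal.mul_rpow_of_nonneg _ _ hp₀.le, ← ENNReal.rpow_mul, inv_mul_cancel₀ hp₀.ne',
      ENNReal.rpow_one]
  have hw_q : ∫⁻ x, (w x ^ (-p⁻¹)) ^ q ∂μ = ∫⁻ x, w x ^ (-(p - 1)⁻¹) ∂μ := by
    refine lintegral_congr fun x => ?_
    rw [← ENNReal.rpow_mul, hpq.conjugate_eq]
    congr 1
    field_simp [hpq.sub_one_ne_zero]
  have holder := ENNReal.lintegral_mul_le_Lp_mul_Lq μ hpq
    (hf.mul (hw.pow_const p⁻¹)) (hw.pow_const (-p⁻¹))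
  simp only [Pi.mul_apply] at holder
  rw [← hfw, hf_p, hw_q] at holder
  calc (∫⁻ x, f x ∂μ) ^ p
      ≤ ((∫⁻ x, f x ^ p * w x ∂μ) ^ (1 / p) * (∫⁻ x, w x ^ (-(p - 1)⁻¹) ∂μ) ^ (1 / q)) ^ p :=
        ENNReal.rpow_le_rpow holder hp₀.le
    _ = (∫⁻ x, w x ^ (-(p - 1)⁻¹) ∂μ) ^ (p - 1) * ∫⁻ x, f x ^ p * w x ∂μ := by
        rw [ENNReal.mul_rpow_of_nonneg _ _ hp₀.le, ← ENNReal.rpow_mul, ← ENNReal.rpow_mul,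
          one_div_mul_cancel hp₀.ne', ENNReal.rpow_one, one_div_mul_eq_div,
          hpq.div_conj_eq_sub_one, mul_comm]

theorem lintegral_Ioi_one_ofReal_rpow_lt_top {β : ℝ} (hβ : β < -1) :
    ∫⁻ t in Ioi (1 : ℝ), ENNReal.ofReal t ^ β < ∞ := by
  calc ∫⁻ t in Ioi (1 : ℝ), ENNReal.ofReal t ^ β
      = ∫⁻ t in Ioi (1 : ℝ), ENNReal.ofReal (t ^ β) :=
        setLIntegral_congr_fun measurableSet_Ioi fun t ht =>
          ENNReal.ofReal_rpow_of_pos (one_pos.trans ht)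
    _ < ∞ := (integrableOn_Ioi_rpow_of_lt hβ one_pos).lintegral_lt_top

section Scaling

variable {E : Type*} [NormedAddCommGroup E] [NormedSpace ℝ E] [FiniteDimensional ℝ E]
  [MeasurableSpace E] [BorelSpace E] (μ : Measure E) [μ.IsAddHaarMeasure]

theorem lintegral_comp_smul_of_pos {G : E → ℝ≥0∞} (hG : Measurable G) {t : ℝ} (ht : 0 < t) :
    ∫⁻ x, G (t • x) ∂μ = ENNReal.ofReal t ^ (-(Module.finrank ℝ E : ℝ)) * ∫⁻ x, G x ∂μ := by
  rw [← lintegral_map hG (measurable_const_smul t), Measure.map_addHaar_smul μ ht.ne',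
    lintegral_smul_measure, abs_of_pos (by positivity), ← Real.rpow_natCast,
    ← Real.rpow_neg ht.le, ENNReal.ofReal_rpow_of_pos ht, smul_eq_mul]

theorem lintegral_lintegral_comp_smul_mul {G : E → ℝ≥0∞} (hG : Measurable G) {w : ℝ → ℝ≥0∞}
    (hw : Measurable w) {a : ℝ} (ha : 0 ≤ a) :
    ∫⁻ x, (∫⁻ t in Ioi a, G (t • x) * w t) ∂μ =
      (∫⁻ t in Ioi a, ENNReal.ofReal t ^ (-(Module.finrank ℝ E : ℝ)) * w t) * ∫⁻ x, G x ∂μ := by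
  have hmeas : Measurable fun z : E × ℝ => G (z.2 • z.1) * w z.2 :=
    (hG.comp (measurable_snd.smul measurable_fst)).mul (hw.comp measurable_snd)
  have hweight : Measurable fun t : ℝ => ENNReal.ofReal t ^ (-(Module.finrank ℝ E : ℝ)) * w t :=
    (ENNReal.measurable_ofReal.pow_const _).mul hw
  rw [lintegral_lintegral_swap hmeas.aemeasurable, ← lintegral_mul_const _ hweight]
  refine setLIntegral_congr_fun measurableSet_Ioi fun t ht => ?_
  rw [lintegral_mul_const (f := fun x => G (t • x)) _ (hG.comp (measurable_const_smul t)),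
    lintegral_comp_smul_of_pos μ hG (ha.trans_lt ht)]
  ring

end Scaling

theorem SchwartzMap.exists_lintegral_inv_norm_smul_rpow_le {E F : Type*} [NormedAddCommGroup E]
    [NormedSpace ℝ E] [FiniteDimensional ℝ E] [MeasurableSpace E] [BorelSpace E]
    [NormedAddCommGroup F] [NormedSpace ℝ F] [CompleteSpace F]
    (μ : Measure E) [μ.IsAddHaarMeasure] {p : ℝ} (hp : 1 < p) (hpE : p < Module.finrank ℝ E) :
    ∃ K : ℝ≥0∞, K ≠ ∞ ∧ ∀ u : 𝓢(E, F),
      ∫⁻ x, ‖‖x‖⁻¹ • u x‖ₑ ^ p ∂μ ≤ K * ∫⁻ x, ‖fderiv ℝ u x‖ₑ ^ p ∂μ := by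
  set n : ℝ := (Module.finrank ℝ E : ℝ)
  have : Nontrivial E :=
    Module.nontrivial_of_finrank_pos (R := ℝ) (Nat.cast_pos.mp (by linarith : (0 : ℝ) < n))
  -- the weight `t ^ α` must make both `t ^ (-α / (p - 1))` and `t ^ (α - n)` integrable on `(1, ∞)`
  obtain ⟨α, hα_lo, hα_hi⟩ : ∃ α : ℝ, p - 1 < α ∧ α < n - 1 :=
    ⟨(p + n) / 2 - 1, by linarith, by linarith⟩
  set B := ∫⁻ t in Ioi (1 : ℝ), (ENNReal.ofReal t ^ α) ^ (-(p - 1)⁻¹)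
  set C := ∫⁻ t in Ioi (1 : ℝ), ENNReal.ofReal t ^ (-n) * ENNReal.ofReal t ^ α
  have hB : B ≠ ∞ := by
    simp_rw [B, ← ENNReal.rpow_mul]
    refine (lintegral_Ioi_one_ofReal_rpow_lt_top ?_).ne
    rw [mul_neg, ← div_eq_mul_inv, neg_lt_neg_iff, one_lt_div (by linarith)]
    exact hα_lo
  have hC : C ≠ ∞ := by
    calc C = ∫⁻ t in Ioi (1 : ℝ), ENNReal.ofReal t ^ (-n + α) :=
          setLIntegral_congr_fun measurableSet_Ioi fun t ht => (ENNReal.rpow_add _ _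
            (ENNReal.ofReal_pos.2 (one_pos.trans ht)).ne' ENNReal.ofReal_ne_top).symm
      _ ≠ ∞ := (lintegral_Ioi_one_ofReal_rpow_lt_top (by linarith)).ne
  refine ⟨B ^ (p - 1) * C, ENNReal.mul_ne_top (ENNReal.rpow_ne_top_of_nonneg (by linarith) hB) hC,
    fun u => ?_⟩
  have hDu : Continuous (fderiv ℝ u) := (u.smooth 1).continuous_fderiv one_ne_zero
  have hpos : ∀ᵐ t ∂volume.restrict (Ioi (1 : ℝ)), 0 < t :=
    (ae_restrict_mem measurableSet_Ioi).mono fun t ht => one_pos.trans ht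
  calc ∫⁻ x, ‖‖x‖⁻¹ • u x‖ₑ ^ p ∂μ
      ≤ ∫⁻ x, (∫⁻ t in Ioi (1 : ℝ), ‖fderiv ℝ u (t • x)‖ₑ) ^ p ∂μ := by
        refine lintegral_mono_ae ((μ.ae_ne 0).mono fun x hx => ?_)
        gcongr
        exact u.enorm_inv_norm_smul_le_lintegral_fderiv hx
    _ ≤ ∫⁻ x, B ^ (p - 1) *
          (∫⁻ t in Ioi (1 : ℝ), ‖fderiv ℝ u (t • x)‖ₑ ^ p * ENNReal.ofReal t ^ α) ∂μ := by
        refine lintegral_mono fun x =>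
          lintegral_rpow_le_weight_mul_lintegral_rpow_mul hp ?_ ?_ ?_ ?_
        · exact (hDu.comp (continuous_id.smul continuous_const)).enorm.aemeasurable
        · exact (ENNReal.measurable_ofReal.pow_const α).aemeasurable
        · filter_upwards [hpos] with t ht
          exact (ENNReal.rpow_pos (ENNReal.ofReal_pos.2 ht) ENNReal.ofReal_ne_top).ne'
        · exact ae_of_all _ fun t =>
            ENNReal.rpow_ne_top_of_nonneg (by linarith) ENNReal.ofReal_ne_top
    _ = B ^ (p - 1) * (C * ∫⁻ x, ‖fderiv ℝ u x‖ₑ ^ p ∂μ) := by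
        rw [lintegral_const_mul' _ _ (ENNReal.rpow_ne_top_of_nonneg (by linarith) hB),
          lintegral_lintegral_comp_smul_mul μ (hDu.measurable.enorm.pow_const p)
            (ENNReal.measurable_ofReal.pow_const α) zero_le_one]
    _ = B ^ (p - 1) * C * ∫⁻ x, ‖fderiv ℝ u x‖ₑ ^ p ∂μ := (mul_assoc _ _ _).symm

theorem eLpNorm_le_rpow_mul_eLpNorm_of_lintegral_rpow_le {α E F : Type*} [MeasurableSpace α]
    {μ : Measure α} [NormedAddCommGroup E] [NormedAddCommGroup F] {f : α → E} {g : α → F}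
    {p : ℝ} (hp : 0 < p) {K : ℝ≥0∞}
    (h : ∫⁻ x, ‖f x‖ₑ ^ p ∂μ ≤ K * ∫⁻ x, ‖g x‖ₑ ^ p ∂μ) :
    eLpNorm f (ENNReal.ofReal p) μ ≤ K ^ p⁻¹ * eLpNorm g (ENNReal.ofReal p) μ := by
  have hp' : ENNReal.ofReal p ≠ 0 := ENNReal.ofReal_ne_zero_iff.2 hp
  rw [eLpNorm_eq_lintegral_rpow_enorm_toReal hp' ENNReal.ofReal_ne_top,
    eLpNorm_eq_lintegral_rpow_enorm_toReal hp' ENNReal.ofReal_ne_top, ENNReal.toReal_ofReal hp.le,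
    one_div, ← ENNReal.mul_rpow_of_nonneg _ _ (inv_nonneg.2 hp.le)]
  exact ENNReal.rpow_le_rpow h (inv_nonneg.2 hp.le)

/-- Hardy's inequality: for `1 < p < d`,
`‖ |x|⁻¹ u ‖_{L^p(ℝ^d)} ≲ ‖ ∇u ‖_{L^p(ℝ^d)}` for Schwartz functions `u`. -/
theorem hardy_inequality (d : ℕ) (p : ℝ) (hp : 1 < p) (hpd : p < d) :
    ∃ C : ℝ, 0 < C ∧ ∀ u : SchwartzMap (Euc d) ℂ,
      eLpNorm (fun x : Euc d => ‖x‖⁻¹ • u x) (ENNReal.ofReal p) volume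
        ≤ ENNReal.ofReal C *
          eLpNorm (fun x : Euc d => fderiv ℝ u x) (ENNReal.ofReal p) volume := by
  obtain ⟨K, hK, hardy⟩ := SchwartzMap.exists_lintegral_inv_norm_smul_rpow_le (E := Euc d)
    (F := ℂ) volume hp (by simpa using hpd)
  have hK' : K ^ p⁻¹ ≠ ∞ := ENNReal.rpow_ne_top_of_nonneg (by positivity) hK
  refine ⟨(K ^ p⁻¹).toReal + 1, by positivity, fun u => ?_⟩
  calc eLpNorm (fun x : Euc d => ‖x‖⁻¹ • u x) (ENNReal.ofReal p) volume
      ≤ K ^ p⁻¹ * eLpNorm (fun x : Euc d => fderiv ℝ u x) (ENNReal.ofReal p) volume :=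
        eLpNorm_le_rpow_mul_eLpNorm_of_lintegral_rpow_le (by linarith) (hardy u)
    _ ≤ ENNReal.ofReal ((K ^ p⁻¹).toReal + 1) *
          eLpNorm (fun x : Euc d => fderiv ℝ u x) (ENNReal.ofReal p) volume := by
        gcongr
        exact (ENNReal.le_ofReal_iff_toReal_le hK' (by positivity)).2 (by linarith)

end
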